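/- Let C be a non-zero graded submodule of M. Then C is a graded strongly classical 2-absorbing second submodule of M if and only if for all graded ideals I = ⊕_{α∈G} I_α, J = ⊕_{β∈G} J_β, K = ⊕_{γ∈G} K_γ of R, all α, β, γ ∈ G, and every graded submodule N of M with I_α·J_β·K_γ·C ⊆ N, either J_β·K_γ·C ⊆ N or I_α·J_β·C ⊆ N or I_α·K_γ·C ⊆ N. -/

import Mathlib

/-!
A graded submodule `N` is the intersection of the completely graded irreducible submodules
containing it (Zorn), so the absorbing property of `C` for `U₁ ⊓ U₂ ⊓ U₃` extends to every
graded `N`. Taking `a ∈ I_α, b ∈ J_β, c ∈ K_γ`, one of `ab, bc, ac` then lies in the ideal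
`N.colon C`; as `I_α, J_β, K_γ` are additive groups and no group is the union of two proper
subgroups, one of the three products of components lies in `N.colon C` entirely.
Conversely, the condition for the principal ideals of `r, s, t` and `N = U₁ ⊓ U₂ ⊓ U₃` gives
the absorbing property; this `N` is graded since graded submodules are exactly those closed
under taking homogeneous components.
-/

open Pointwise

section GradedDefs

variable {G : Type*} [Group G] [DecidableEq G] {R : Type*} [CommRing R]
  {M : Type*} [AddCommGroup M] [Module R M]

/-- `R` is a `G`-graded commutative ring via the additive subgroups `𝒜 α`:
`R_α R_β ⊆ R_{αβ}` and `R = ⊕_{α ∈ G} R_α`. -/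
structure IsRingGrading (𝒜 : G → AddSubgroup R) : Prop where
  one_mem : (1 : R) ∈ 𝒜 1
  mul_mem : ∀ ⦃α β : G⦄ ⦃r s : R⦄, r ∈ 𝒜 α → s ∈ 𝒜 β → r * s ∈ 𝒜 (α * β)
  isInternal : DirectSum.IsInternal 𝒜

/-- `M` is a graded module over the `G`-graded ring `R`:
`R_α M_β ⊆ M_{αβ}` and `M = ⊕_{α ∈ G} M_α`. -/
structure IsModuleGrading (𝒜 : G → AddSubgroup R) (ℳ : G → AddSubgroup M) : Prop where
  smul_mem : ∀ ⦃α β : G⦄ ⦃r : R⦄ ⦃m : M⦄, r ∈ 𝒜 α → m ∈ ℳ β → r • m ∈ ℳ (α * β)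
  isInternal : DirectSum.IsInternal ℳ

/-- A submodule `N` of `M` is a graded submodule iff `N = ⊕_{α ∈ G} (N ∩ M_α)`,
equivalently, every element of `N` is a sum of homogeneous elements of `N`. -/
def IsGradedSubmodule (ℳ : G → AddSubgroup M) (N : Submodule R M) : Prop :=
  ∀ n ∈ N, n ∈ Submodule.span R {m : M | m ∈ N ∧ ∃ α, m ∈ ℳ α}

/-- An ideal `I` of `R` is a graded ideal iff `I = ⊕_{α ∈ G} (I ∩ R_α)`. -/
def IsGradedIdeal (𝒜 : G → AddSubgroup R) (I : Ideal R) : Prop :=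
  ∀ r ∈ I, r ∈ Ideal.span {s : R | s ∈ I ∧ ∃ α, s ∈ 𝒜 α}

/-- A proper graded submodule `C` of `M` is completely graded irreducible if whenever
`C = ⋂_{λ ∈ Δ} C_λ` for a family of graded submodules `C_λ`, then `C = C_β` for some `β`. -/
def CompletelyGradedIrreducible (ℳ : G → AddSubgroup M) (C : Submodule R M) : Prop :=
  IsGradedSubmodule ℳ C ∧ C ≠ ⊤ ∧
    ∀ S : Set (Submodule R M), (∀ D ∈ S, IsGradedSubmodule ℳ D) → C = sInf S → C ∈ S

/-- A non-zero graded submodule `C` of `M` is a graded classical 2-absorbing second submodule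
if whenever `r, s, t ∈ h(R)`, `U` is a completely graded irreducible submodule of `M` and
`r·s·t·C ⊆ U`, then `r·s·C ⊆ U` or `s·t·C ⊆ U` or `r·t·C ⊆ U`. -/
def IsGrClassical2AbsorbingSecond (𝒜 : G → AddSubgroup R) (ℳ : G → AddSubgroup M)
    (C : Submodule R M) : Prop :=
  C ≠ ⊥ ∧ IsGradedSubmodule ℳ C ∧
    ∀ r s t : R, (∃ α, r ∈ 𝒜 α) → (∃ β, s ∈ 𝒜 β) → (∃ γ, t ∈ 𝒜 γ) →
      ∀ U : Submodule R M, CompletelyGradedIrreducible ℳ U →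
        r • s • t • C ≤ U → (r • s • C ≤ U ∨ s • t • C ≤ U ∨ r • t • C ≤ U)

/-- A non-zero graded submodule `C` of `M` is a graded strongly classical 2-absorbing second
submodule if whenever `r, s, t ∈ h(R)`, `U₁, U₂, U₃` are completely graded irreducible
submodules of `M` and `r·s·t·C ⊆ U₁ ∩ U₂ ∩ U₃`, then `r·s·C ⊆ U₁ ∩ U₂ ∩ U₃` or
`s·t·C ⊆ U₁ ∩ U₂ ∩ U₃` or `r·t·C ⊆ U₁ ∩ U₂ ∩ U₃`. -/
def IsGrStronglyClassical2AbsorbingSecond (𝒜 : G → AddSubgroup R) (ℳ : G → AddSubgroup M)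
    (C : Submodule R M) : Prop :=
  C ≠ ⊥ ∧ IsGradedSubmodule ℳ C ∧
    ∀ r s t : R, (∃ α, r ∈ 𝒜 α) → (∃ β, s ∈ 𝒜 β) → (∃ γ, t ∈ 𝒜 γ) →
      ∀ U₁ U₂ U₃ : Submodule R M, CompletelyGradedIrreducible ℳ U₁ →
        CompletelyGradedIrreducible ℳ U₂ → CompletelyGradedIrreducible ℳ U₃ →
        r • s • t • C ≤ U₁ ⊓ U₂ ⊓ U₃ →
        (r • s • C ≤ U₁ ⊓ U₂ ⊓ U₃ ∨ s • t • C ≤ U₁ ⊓ U₂ ⊓ U₃ ∨ r • t • C ≤ U₁ ⊓ U₂ ⊓ U₃)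

/-- A non-zero graded submodule `S` of `M` is a graded weakly second submodule if whenever
`r, s ∈ h(R)`, `N` is a graded submodule of `M` and `r·s·S ⊆ N`, then `r·S ⊆ N` or `s·S ⊆ N`. -/
def IsGrWeaklySecond (𝒜 : G → AddSubgroup R) (ℳ : G → AddSubgroup M)
    (S : Submodule R M) : Prop :=
  S ≠ ⊥ ∧ IsGradedSubmodule ℳ S ∧
    ∀ r s : R, (∃ α, r ∈ 𝒜 α) → (∃ β, s ∈ 𝒜 β) →
      ∀ N : Submodule R M, IsGradedSubmodule ℳ N →
        r • s • S ≤ N → (r • S ≤ N ∨ s • S ≤ N)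

/-- A proper graded ideal `I` of `R` is a graded 2-absorbing ideal if whenever `r, s, t ∈ h(R)`
with `r·s·t ∈ I`, then `r·s ∈ I` or `r·t ∈ I` or `s·t ∈ I`. -/
def IsGr2AbsorbingIdeal (𝒜 : G → AddSubgroup R) (I : Ideal R) : Prop :=
  I ≠ ⊤ ∧ IsGradedIdeal 𝒜 I ∧
    ∀ r s t : R, (∃ α, r ∈ 𝒜 α) → (∃ β, s ∈ 𝒜 β) → (∃ γ, t ∈ 𝒜 γ) →
      r * s * t ∈ I → (r * s ∈ I ∨ r * t ∈ I ∨ s * t ∈ I)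

end GradedDefs

namespace AddSubgroup

variable {R : Type*} [NonUnitalNonAssocRing R] {P A B D : AddSubgroup R}

theorem forall_mul_mem_of_mul_notMem_of_mul_notMem {a b₀ c₀ : R}
    (h : ∀ b ∈ B, ∀ c ∈ D, a * b ∈ P ∨ b * c ∈ P ∨ a * c ∈ P)
    (hb₀ : b₀ ∈ B) (hab₀ : a * b₀ ∉ P) (hc₀ : c₀ ∈ D) (hac₀ : a * c₀ ∉ P) :
    ∀ b ∈ B, ∀ c ∈ D, b * c ∈ P := by
  have hD : ∀ b ∈ B, a * b ∉ P → D ≤ P.comap (AddMonoidHom.mulLeft b) := by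
    intro b hb hab
    refine (AddSubgroupClass.subset_union.mp fun c hc => ?_).resolve_left
      fun hD : D ≤ P.comap (AddMonoidHom.mulLeft a) => hac₀ (hD hc₀)
    simpa [hab, or_comm] using h b hb c hc
  intro b hb c hc
  refine ((AddSubgroupClass.subset_union.mp fun b hb => ?_).resolve_left
    fun hB : B ≤ P.comap (AddMonoidHom.mulLeft a) => hab₀ (hB hb₀) :
      B ≤ P.comap (AddMonoidHom.mulRight c)) hb
  by_cases hab : a * b ∈ P
  · exact Or.inl hab
  · exact Or.inr (hD b hb hab hc)

theorem mul_mem_or_of_forall_mul_mem_or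
    (h : ∀ a ∈ A, ∀ b ∈ B, ∀ c ∈ D, a * b ∈ P ∨ b * c ∈ P ∨ a * c ∈ P) :
    (∀ a ∈ A, ∀ b ∈ B, a * b ∈ P) ∨ (∀ b ∈ B, ∀ c ∈ D, b * c ∈ P) ∨
      (∀ a ∈ A, ∀ c ∈ D, a * c ∈ P) := by
  by_cases hBD : ∀ b ∈ B, ∀ c ∈ D, b * c ∈ P
  · exact Or.inr (Or.inl hBD)
  have hA : A ≤ (⨅ b : B, P.comap (AddMonoidHom.mulRight (b : R))) ∨
      A ≤ ⨅ c : D, P.comap (AddMonoidHom.mulRight (c : R)) := by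
    refine AddSubgroupClass.subset_union.mp fun a ha => ?_
    by_contra hab
    simp only [Set.mem_union, SetLike.mem_coe, mem_iInf, mem_comap, AddMonoidHom.coe_mulRight,
      Subtype.forall, not_or, not_forall] at hab
    obtain ⟨⟨b₀, hb₀, hab₀⟩, c₀, hc₀, hac₀⟩ := hab
    exact hBD (forall_mul_mem_of_mul_notMem_of_mul_notMem (h a ha) hb₀ hab₀ hc₀ hac₀)
  simp only [SetLike.le_def, mem_iInf, mem_comap, AddMonoidHom.coe_mulRight, Subtype.forall] at hA
  exact hA.imp (fun hA a ha b hb => hA ha b hb) fun hA => Or.inr fun a ha c hc => hA ha c hc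

end AddSubgroup

namespace DirectSum

variable {ι M σ : Type*} [DecidableEq ι] [AddCommMonoid M] [SetLike σ M] [AddSubmonoidClass σ M]
  (ℳ : ι → σ) [Decomposition ℳ]

theorem coe_decompose_mem_of_mem_of_mem {P : Type*} [SetLike P M] [AddSubmonoidClass P M]
    {p : P} {m : M} {i : ι} (hm : m ∈ ℳ i) (hmp : m ∈ p) (j : ι) :
    (decompose ℳ m j : M) ∈ p := by
  by_cases hij : i = j
  · subst hij
    rwa [decompose_of_mem_same ℳ hm]
  · rw [decompose_of_mem_ne ℳ hm hij]
    exact zero_mem p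

end DirectSum

section GradedSubmodule

open DirectSum

variable {G : Type*} {R : Type*} [CommRing R] {M : Type*} [AddCommGroup M] [Module R M]
  {𝒜 : G → AddSubgroup R} {ℳ : G → AddSubgroup M}

theorem IsGradedSubmodule.isHomogeneous [Group G] [DecidableEq G] [Decomposition 𝒜]
    [Decomposition ℳ] (hℳ : IsModuleGrading 𝒜 ℳ) {N : Submodule R M}
    (hN : IsGradedSubmodule ℳ N) : SetLike.IsHomogeneous ℳ N := by
  classical
  let N' : AddSubmonoid M :=
    { carrier := {m | ∀ i, (decompose ℳ m i : M) ∈ N}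
      add_mem' := fun h₁ h₂ i => by simpa using N.add_mem (h₁ i) (h₂ i)
      zero_mem' := fun i => by simp }
  have hhom : ∀ {i m}, m ∈ ℳ i → m ∈ N → m ∈ N' := fun hm hmN =>
    coe_decompose_mem_of_mem_of_mem ℳ hm hmN
  have hsmul : ∀ (r : R) {m}, m ∈ N' → r • m ∈ N' := by
    intro r m hm
    rw [← sum_support_decompose ℳ m, Finset.smul_sum]
    refine sum_mem fun i _ => ?_
    induction r using Decomposition.inductionOn 𝒜 with
    | zero => simp [N'.zero_mem]
    | homogeneous r => exact hhom (hℳ.smul_mem r.2 (decompose ℳ m i).2) (N.smul_mem _ (hm i))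
    | add r₁ r₂ h₁ h₂ => simpa [add_smul] using N'.add_mem h₁ h₂
  let N'' : Submodule R M := { N' with smul_mem' := fun r _ hm => hsmul r hm }
  have hle : N ≤ N'' := by
    refine (Submodule.span_le.mpr ?_).trans' fun n hn => hN n hn
    rintro m ⟨hmN, _, hm⟩
    exact hhom hm hmN
  exact fun i n hn => hle hn i

theorem isGradedSubmodule_of_isHomogeneous [DecidableEq G] [Decomposition ℳ] {N : Submodule R M}
    (hN : SetLike.IsHomogeneous ℳ N) : IsGradedSubmodule ℳ N := by
  classical
  intro n hn
  rw [← sum_support_decompose ℳ n]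
  exact sum_mem fun i _ => Submodule.subset_span ⟨hN i hn, i, (decompose ℳ n i).2⟩

theorem IsGradedSubmodule.inf [Group G] [DecidableEq G] (h𝒜 : IsRingGrading 𝒜)
    (hℳ : IsModuleGrading 𝒜 ℳ) {N₁ N₂ : Submodule R M} (h₁ : IsGradedSubmodule ℳ N₁)
    (h₂ : IsGradedSubmodule ℳ N₂) : IsGradedSubmodule ℳ (N₁ ⊓ N₂) := by
  let := h𝒜.isInternal.chooseDecomposition
  let := hℳ.isInternal.chooseDecomposition
  exact isGradedSubmodule_of_isHomogeneous fun i _ hn =>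
    ⟨h₁.isHomogeneous hℳ i hn.1, h₂.isHomogeneous hℳ i hn.2⟩

theorem isGradedSubmodule_sSup {S : Set (Submodule R M)} (hS : ∀ D ∈ S, IsGradedSubmodule ℳ D) :
    IsGradedSubmodule ℳ (sSup S) := by
  refine fun n hn => (sSup_le fun D hD m hm => ?_ : sSup S ≤ _) hn
  refine Submodule.span_mono ?_ (hS D hD m hm)
  exact fun x ⟨hxD, hx⟩ => ⟨Submodule.mem_sSup_of_mem hD hxD, hx⟩

theorem completelyGradedIrreducible_of_maximal {x : M} {U : Submodule R M}
    (hU : Maximal (fun K : Submodule R M => IsGradedSubmodule ℳ K ∧ x ∉ K) U) :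
    CompletelyGradedIrreducible ℳ U := by
  refine ⟨hU.1.1, fun hU' => hU.1.2 (hU' ▸ Submodule.mem_top), fun S hS hUS => ?_⟩
  by_contra hUS'
  have hxS : ∀ D ∈ S, x ∈ D := by
    intro D hD
    by_contra hxD
    have hUD : U ≤ D := hUS ▸ sInf_le hD
    exact hUS' (le_antisymm hUD (hU.2 ⟨hS D hD, hxD⟩ hUD) ▸ hD)
  exact hU.1.2 (hUS ▸ Submodule.mem_sInf.mpr hxS)

theorem exists_completelyGradedIrreducible_ge_of_notMem {N : Submodule R M}
    (hN : IsGradedSubmodule ℳ N) {x : M} (hx : x ∉ N) :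
    ∃ U, CompletelyGradedIrreducible ℳ U ∧ N ≤ U ∧ x ∉ U := by
  let 𝒮 : Set (Submodule R M) := {K | IsGradedSubmodule ℳ K ∧ x ∉ K}
  have hchain : ∀ c ⊆ 𝒮, IsChain (· ≤ ·) c → ∀ y ∈ c, ∃ ub ∈ 𝒮, ∀ D ∈ c, D ≤ ub := by
    intro c hc hchain y hy
    refine ⟨sSup c, ⟨isGradedSubmodule_sSup fun D hD => (hc hD).1, fun hxc => ?_⟩,
      fun _ => le_sSup⟩
    obtain ⟨D, hD, hxD⟩ := (Submodule.mem_sSup_of_directed ⟨y, hy⟩ hchain.directedOn).mp hxc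
    exact (hc hD).2 hxD
  obtain ⟨U, hNU, hU⟩ := zorn_le_nonempty₀ 𝒮 hchain N ⟨hN, hx⟩
  exact ⟨U, completelyGradedIrreducible_of_maximal hU, hNU, hU.1.2⟩

end GradedSubmodule

section Absorbing

variable {G : Type*} {R : Type*} [CommRing R] {M : Type*} [AddCommGroup M] [Module R M]
  {𝒜 : G → AddSubgroup R} {ℳ : G → AddSubgroup M} {C : Submodule R M}

theorem IsGrStronglyClassical2AbsorbingSecond.smul_le_or
    (hC : IsGrStronglyClassical2AbsorbingSecond 𝒜 ℳ C) {r s t : R} (hr : ∃ α, r ∈ 𝒜 α)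
    (hs : ∃ β, s ∈ 𝒜 β) (ht : ∃ γ, t ∈ 𝒜 γ) {N : Submodule R M} (hN : IsGradedSubmodule ℳ N)
    (h : r • s • t • C ≤ N) : r • s • C ≤ N ∨ s • t • C ≤ N ∨ r • t • C ≤ N := by
  by_contra! H
  simp only [SetLike.not_le_iff_exists] at H
  obtain ⟨⟨x₁, hx₁, hx₁N⟩, ⟨x₂, hx₂, hx₂N⟩, ⟨x₃, hx₃, hx₃N⟩⟩ := H
  obtain ⟨U₁, hU₁, hNU₁, hx₁U₁⟩ := exists_completelyGradedIrreducible_ge_of_notMem hN hx₁N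
  obtain ⟨U₂, hU₂, hNU₂, hx₂U₂⟩ := exists_completelyGradedIrreducible_ge_of_notMem hN hx₂N
  obtain ⟨U₃, hU₃, hNU₃, hx₃U₃⟩ := exists_completelyGradedIrreducible_ge_of_notMem hN hx₃N
  rcases hC.2.2 r s t hr hs ht U₁ U₂ U₃ hU₁ hU₂ hU₃ (h.trans (le_inf (le_inf hNU₁ hNU₂) hNU₃))
    with h' | h' | h'
  · exact hx₁U₁ (h' hx₁).1.1
  · exact hx₂U₂ (h' hx₂).1.2
  · exact hx₃U₃ (h' hx₃).2

theorem isGradedIdeal_span_singleton {r : R} {α : G} (hr : r ∈ 𝒜 α) :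
    IsGradedIdeal 𝒜 (Ideal.span {r}) := by
  intro x hx
  refine Ideal.span_mono ?_ hx
  rintro y rfl
  exact ⟨Ideal.mem_span_singleton_self y, α, hr⟩

theorem smul_smul_smul_le_of_mem_span_singleton {N : Submodule R M} {r s t a b c : R}
    (ha : a ∈ Ideal.span {r}) (hb : b ∈ Ideal.span {s}) (hc : c ∈ Ideal.span {t})
    (h : r • s • t • C ≤ N) : a • b • c • C ≤ N := by
  rw [← mul_smul, ← mul_smul, ← Submodule.mem_colon_iff_le] at h ⊢
  obtain ⟨x, rfl⟩ := Ideal.mem_span_singleton'.mp ha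
  obtain ⟨y, rfl⟩ := Ideal.mem_span_singleton'.mp hb
  obtain ⟨z, rfl⟩ := Ideal.mem_span_singleton'.mp hc
  convert (N.colon C).mul_mem_left (x * y * z) h using 1
  ring

end Absorbing

theorem stmt12 {G : Type*} [Group G] [DecidableEq G] {R : Type*} [CommRing R]
    {M : Type*} [AddCommGroup M] [Module R M]
    (𝒜 : G → AddSubgroup R) (ℳ : G → AddSubgroup M)
    (h𝒜 : IsRingGrading 𝒜) (hℳ : IsModuleGrading 𝒜 ℳ)
    (C : Submodule R M) (hC0 : C ≠ ⊥) (hCgr : IsGradedSubmodule ℳ C) :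
    IsGrStronglyClassical2AbsorbingSecond 𝒜 ℳ C ↔
      ∀ I J K : Ideal R, IsGradedIdeal 𝒜 I → IsGradedIdeal 𝒜 J → IsGradedIdeal 𝒜 K →
        ∀ (α β γ : G) (N : Submodule R M), IsGradedSubmodule ℳ N →
          (∀ a b c : R, a ∈ I → a ∈ 𝒜 α → b ∈ J → b ∈ 𝒜 β → c ∈ K → c ∈ 𝒜 γ →
            a • b • c • C ≤ N) →
          ((∀ b c : R, b ∈ J → b ∈ 𝒜 β → c ∈ K → c ∈ 𝒜 γ → b • c • C ≤ N) ∨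
            (∀ a b : R, a ∈ I → a ∈ 𝒜 α → b ∈ J → b ∈ 𝒜 β → a • b • C ≤ N) ∨
            (∀ a c : R, a ∈ I → a ∈ 𝒜 α → c ∈ K → c ∈ 𝒜 γ → a • c • C ≤ N)) := by
  constructor
  · intro hC I J K _ _ _ α β γ N hN h
    have key := AddSubgroup.mul_mem_or_of_forall_mul_mem_or (P := (N.colon C).toAddSubgroup)
      (A := I.toAddSubgroup ⊓ 𝒜 α) (B := J.toAddSubgroup ⊓ 𝒜 β) (D := K.toAddSubgroup ⊓ 𝒜 γ)
      fun a ⟨ha, ha'⟩ b ⟨hb, hb'⟩ c ⟨hc, hc'⟩ => by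
        simpa [Submodule.mem_colon_iff_le, mul_smul] using
          hC.smul_le_or ⟨α, ha'⟩ ⟨β, hb'⟩ ⟨γ, hc'⟩ hN (h a b c ha ha' hb hb' hc hc')
    simp only [AddSubgroup.mem_inf, Submodule.mem_toAddSubgroup, Submodule.mem_colon_iff_le,
      mul_smul, and_imp] at key
    rcases key with h | h | h
    · exact Or.inr (Or.inl fun a b ha ha' hb hb' => h a ha ha' b hb hb')
    · exact Or.inl fun b c hb hb' hc hc' => h b hb hb' c hc hc'
    · exact Or.inr (Or.inr fun a c ha ha' hc hc' => h a ha ha' c hc hc')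
  · intro h
    refine ⟨hC0, hCgr, ?_⟩
    rintro r s t ⟨α, hr⟩ ⟨β, hs⟩ ⟨γ, ht⟩ U₁ U₂ U₃ hU₁ hU₂ hU₃ hrst
    have hU : IsGradedSubmodule ℳ (U₁ ⊓ U₂ ⊓ U₃) :=
      (hU₁.1.inf h𝒜 hℳ hU₂.1).inf h𝒜 hℳ hU₃.1
    have hself := Ideal.mem_span_singleton_self (α := R)
    rcases h _ _ _ (isGradedIdeal_span_singleton hr) (isGradedIdeal_span_singleton hs)
        (isGradedIdeal_span_singleton ht) α β γ _ hU
        fun a b c ha _ hb _ hc _ => smul_smul_smul_le_of_mem_span_singleton ha hb hc hrst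
      with h | h | h
    · exact Or.inr (Or.inl (h s t (hself s) hs (hself t) ht))
    · exact Or.inl (h r s (hself r) hr (hself s) hs)
    · exact Or.inr (Or.inr (h r t (hself r) hr (hself t) ht))
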